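/- arXiv:1410.0780 — 5 statements merged into one kernel-verified Lean document; each statement's English description precedes it below -/
import Mathlib

section
/- For all real numbers x ≥ α ≥ 1, the incomplete Gamma integral satisfies ∫_x^∞ r^{α-1} e^{-r} dr ≤ 2^{α+1} x^α e^{-x} / α. -/
open Real MeasureTheory

/-! On `(x, ∞)` the integrand is dominated by `x^(α-1) e^(-x) e^(-(r-x)/α)`: since
`log (r/x) ≤ r/x - 1` and `x ≥ α`, the factor `r^(α-1)` grows at most like `e^((1-1/α)(r-x))`.
Integrating the majorant gives `α x^(α-1) e^(-x)`, and Bernoulli's inequality `1 + α ≤ 2^α`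
yields `α² ≤ 2^(α+1) x`. -/

lemma rpow_le_rpow_mul_exp {x r a : ℝ} (hx : 0 < x) (hr : 0 ≤ r) (ha : 0 ≤ a) :
    r ^ a ≤ x ^ a * exp (a * (r / x - 1)) := by
  have hrx : 0 ≤ r / x := div_nonneg hr hx.le
  calc r ^ a = x ^ a * (r / x) ^ a := by
        rw [← mul_rpow hx.le hrx, mul_div_cancel₀ r hx.ne']
    _ ≤ x ^ a * exp (r / x - 1) ^ a := by
        gcongr
        linarith [add_one_le_exp (r / x - 1)]
    _ = x ^ a * exp (a * (r / x - 1)) := by rw [← exp_mul, mul_comm (r / x - 1)]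

lemma rpow_sub_one_mul_exp_neg_le {α x r : ℝ} (hα : 1 ≤ α) (hx : α ≤ x) (hxr : x ≤ r) :
    r ^ (α - 1) * exp (-r) ≤ x ^ (α - 1) * exp (-(1 - α⁻¹) * x) * exp (-α⁻¹ * r) := by
  have hx0 : 0 < x := by linarith
  have hslope : (α - 1) * (r / x - 1) ≤ (α - 1) * ((r - x) / α) := by
    rw [div_sub_one hx0.ne']
    gcongr
  calc r ^ (α - 1) * exp (-r) ≤ x ^ (α - 1) * exp ((α - 1) * (r / x - 1)) * exp (-r) := by
        gcongr
        exact rpow_le_rpow_mul_exp hx0 (by linarith) (by linarith)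
    _ ≤ x ^ (α - 1) * exp ((α - 1) * ((r - x) / α)) * exp (-r) := by gcongr
    _ = x ^ (α - 1) * exp (-(1 - α⁻¹) * x) * exp (-α⁻¹ * r) := by
        rw [mul_assoc, mul_assoc, ← exp_add, ← exp_add]
        congr 2
        field_simp
        ring

lemma integral_Ioi_rpow_sub_one_mul_exp_neg_le {α x : ℝ} (hα : 1 ≤ α) (hx : α ≤ x) :
    ∫ r in Set.Ioi x, r ^ (α - 1) * exp (-r) ≤ α * x ^ (α - 1) * exp (-x) := by
  have hα0 : 0 < α := by linarith
  have hdecay : -α⁻¹ < 0 := neg_neg_of_pos (inv_pos.mpr hα0)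
  calc ∫ r in Set.Ioi x, r ^ (α - 1) * exp (-r)
      ≤ ∫ r in Set.Ioi x, x ^ (α - 1) * exp (-(1 - α⁻¹) * x) * exp (-α⁻¹ * r) := by
        refine setIntegral_mono_of_nonneg (fun r hr => ?_)
          (fun r hr => rpow_sub_one_mul_exp_neg_le hα hx (le_of_lt hr))
          ((integrableOn_exp_mul_Ioi hdecay x).const_mul _)
        have hr0 : 0 < r := by linarith [show x < r from hr]
        positivity
    _ = α * x ^ (α - 1) * exp (-x) := by
        have hexp : exp (-(1 - α⁻¹) * x) * exp (-α⁻¹ * x) = exp (-x) := by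
          rw [← exp_add]
          ring_nf
        rw [integral_const_mul, integral_exp_mul_Ioi hdecay, neg_div_neg_eq, div_inv_eq_mul]
        linear_combination α * x ^ (α - 1) * hexp

lemma sq_le_two_rpow_add_one_mul {α x : ℝ} (hα : 1 ≤ α) (hx : α ≤ x) :
    α ^ 2 ≤ 2 ^ (α + 1) * x := by
  have hbernoulli : 1 + α ≤ (2 : ℝ) ^ α := by
    simpa [one_add_one_eq_two] using
      one_add_mul_self_le_rpow_one_add (by norm_num : (-1 : ℝ) ≤ 1) hα
  rw [rpow_add_one two_ne_zero]
  nlinarith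

theorem incomplete_gamma_bound (x α : ℝ) (hα : 1 ≤ α) (hx : α ≤ x) :
    ∫ r in Set.Ioi x, r ^ (α - 1) * Real.exp (-r) ≤
      2 ^ (α + 1) * x ^ α * Real.exp (-x) / α := by
  have hx0 : 0 < x := by linarith
  calc ∫ r in Set.Ioi x, r ^ (α - 1) * Real.exp (-r)
      ≤ α * x ^ (α - 1) * exp (-x) := integral_Ioi_rpow_sub_one_mul_exp_neg_le hα hx
    _ = α ^ 2 * x ^ (α - 1) * exp (-x) / α := by field_simp
    _ ≤ 2 ^ (α + 1) * x * x ^ (α - 1) * exp (-x) / α := by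
        gcongr
        exact sq_le_two_rpow_add_one_mul hα hx
    _ = 2 ^ (α + 1) * x ^ α * Real.exp (-x) / α := by
        rw [mul_assoc _ x, ← rpow_one_add' hx0.le (by linarith), add_sub_cancel]
end

section
/- Let X be a random vector in ℝⁿ with characteristic function φ_X(ξ) = E[exp(i⟨ξ,X⟩)], and let K be a bounded symmetric star-shaped set (unit ball of a quasi-norm ‖·‖). Then for every t > 0, P(‖X‖ ≤ t) ≤ vol(K) · (t/(2π))ⁿ · ∫_{ℝⁿ} |φ_X(ξ)| dξ. -/
open MeasureTheory Real ProbabilityTheory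

/-!
For a Schwartz function `g`, Fourier inversion and Fubini give
`∫ g dν = ∫ φ(2πξ) 𝓕g(ξ) dξ` for the law `ν` of `X`, and `|𝓕g| ≤ ‖g‖₁`; hence
`∫ g dν ≤ (2π)⁻ⁿ ‖φ‖₁ ∫ g` for smooth compactly supported `g ≥ 0`. Smooth Urysohn functions
between a compact set and an open set, together with inner regularity of `ν` and outer
regularity of Lebesgue measure, upgrade this to `ν ≤ (2π)⁻ⁿ ‖φ‖₁ • vol`. Finally
`{‖x‖ ≤ t} = t • K` has volume `tⁿ vol(K)`.
-/

open Set Function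
open scoped FourierTransform RealInnerProductSpace SchwartzMap NNReal ENNReal Pointwise

section
open scoped ContDiff

variable {E : Type*} [NormedAddCommGroup E] [NormedSpace ℝ E] [FiniteDimensional ℝ E]

theorem exists_contDiff_one_of_isCompact_subset_isOpen {K U : Set E} (hK : IsCompact K)
    (hU : IsOpen U) (hKU : K ⊆ U) :
    ∃ f : E → ℝ, ContDiff ℝ ∞ f ∧ HasCompactSupport f ∧ EqOn f 1 K ∧ support f ⊆ U ∧
      ∀ x, f x ∈ Icc 0 1 := by
  obtain ⟨L, hL, hKL, hLU⟩ := exists_compact_between hK hU hKU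
  obtain ⟨f, hf1, hf0, hf01⟩ := exists_contMDiffMap_one_nhds_of_subset_interior
    (modelWithCornersSelf ℝ E) (n := ⊤) hK.isClosed hKL
  have hsupp : support f ⊆ L := fun x hx => by_contra fun hxL => hx (hf0 x hxL)
  refine ⟨f, contMDiff_iff_contDiff.1 f.contMDiff, hL.of_isClosed_subset isClosed_closure ?_,
    fun x hx => hf1.self_of_nhdsSet x hx, hsupp.trans hLU, hf01⟩
  exact closure_minimal hsupp hL.isClosed

variable [MeasurableSpace E] [BorelSpace E]

theorem MeasureTheory.Measure.le_smul_of_integral_le {ν μ : Measure E} [ν.InnerRegular]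
    [IsFiniteMeasureOnCompacts ν] [μ.OuterRegular] [IsFiniteMeasureOnCompacts μ] {c : ℝ≥0}
    (h : ∀ f : E → ℝ, ContDiff ℝ ∞ f → HasCompactSupport f → (∀ x, 0 ≤ f x) →
      ∫ x, f x ∂ν ≤ c * ∫ x, f x ∂μ) :
    ν ≤ c • μ := by
  have hcompact_le_open : ∀ K U, IsCompact K → IsOpen U → K ⊆ U → ν K ≤ (c • μ) U := by
    intro K U hK hU hKU
    obtain ⟨f, hf, hfc, hf1, hfU, hf01⟩ := exists_contDiff_one_of_isCompact_subset_isOpen hK hU hKU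
    have hf0 : ∀ x, 0 ≤ f x := fun x => (hf01 x).1
    have hf_int : ∀ ρ : Measure E, [IsFiniteMeasureOnCompacts ρ] → Integrable f ρ := fun ρ _ =>
      hf.continuous.integrable_of_hasCompactSupport hfc
    calc ν K = ∫⁻ x, K.indicator 1 x ∂ν := (lintegral_indicator_one hK.measurableSet).symm
      _ ≤ ∫⁻ x, ENNReal.ofReal (f x) ∂ν := lintegral_mono fun x => by
          by_cases hx : x ∈ K
          · simp [hx, hf1 hx]
          · simp [hx]
      _ = ENNReal.ofReal (∫ x, f x ∂ν) :=
          (ofReal_integral_eq_lintegral_ofReal (hf_int ν) (.of_forall hf0)).symm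
      _ ≤ ENNReal.ofReal (c * ∫ x, f x ∂μ) := ENNReal.ofReal_le_ofReal (h f hf hfc hf0)
      _ = c * ∫⁻ x, ENNReal.ofReal (f x) ∂μ := by
          rw [ENNReal.ofReal_mul c.coe_nonneg, ENNReal.ofReal_coe_nnreal,
            ofReal_integral_eq_lintegral_ofReal (hf_int μ) (.of_forall hf0)]
      _ ≤ c * ∫⁻ x, U.indicator 1 x ∂μ := by
          gcongr with x
          by_cases hx : x ∈ U
          · simpa [hx] using (hf01 x).2
          · simp [hx, notMem_support.1 fun h => hx (hfU h)]
      _ = (c • μ) U := by rw [lintegral_indicator_one hU.measurableSet]; rfl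
  refine Measure.le_iff.2 fun A hA => ?_
  rw [hA.measure_eq_iSup_isCompact ν, A.measure_eq_iInf_isOpen (c • μ)]
  exact iSup₂_le fun K hKA => iSup_le fun hK =>
    le_iInf₂ fun U hAU => le_iInf fun hU => hcompact_le_open K U hK hU (hKA.trans hAU)

end

section

open Module

variable {V : Type*} [NormedAddCommGroup V] [InnerProductSpace ℝ V] [FiniteDimensional ℝ V]
  [MeasurableSpace V] [BorelSpace V]

theorem integral_fourierInv_eq_integral_charFun_mul (ν : Measure V) [IsFiniteMeasure ν]
    {G : V → ℂ} (hG : Integrable G) :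
    ∫ x, 𝓕⁻ G x ∂ν = ∫ ξ, charFun ν ((2 * π) • ξ) * G ξ := by
  set F : V → V → ℂ := fun x ξ => Complex.exp (↑(2 * π * ⟪ξ, x⟫) * Complex.I) * G ξ
  have hF : Integrable (uncurry F) (ν.prod volume) := by
    refine ((integrable_const (1 : ℝ)).mul_prod hG.norm).mono' ?_ ?_
    · exact (Continuous.aestronglyMeasurable (by fun_prop)).mul hG.1.comp_snd
    · filter_upwards with p
      simp only [uncurry, F, norm_mul, Complex.norm_exp_ofReal_mul_I, one_mul, le_refl]
  calc ∫ x, 𝓕⁻ G x ∂ν = ∫ x, (∫ ξ, F x ξ) ∂ν := by simp only [Real.fourierInv_eq', smul_eq_mul, F]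
    _ = ∫ ξ, ∫ x, F x ξ ∂ν := integral_integral_swap hF
    _ = ∫ ξ, charFun ν ((2 * π) • ξ) * G ξ := by
      simp only [F, charFun_apply, integral_mul_const, inner_smul_right, real_inner_comm]

theorem norm_integral_le_of_integrable_charFun (ν : Measure V) [IsFiniteMeasure ν]
    (hν : Integrable (charFun ν)) (g : 𝓢(V, ℂ)) :
    ‖∫ x, g x ∂ν‖ ≤ ((2 * π) ^ finrank ℝ V)⁻¹ * (∫ ξ, ‖charFun ν ξ‖) * ∫ x, ‖g x‖ := by
  have hFg : Integrable (𝓕 (g : V → ℂ)) := (𝓕 g).integrable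
  have hFg_le : ∀ ξ, ‖𝓕 (g : V → ℂ) ξ‖ ≤ ∫ x, ‖g x‖ := fun ξ =>
    (SchwartzMap.norm_fourier_apply_le_toLp_one g ξ).trans_eq SchwartzMap.norm_toLp_one
  have hscale : Integrable fun ξ : V => ‖charFun ν ((2 * π) • ξ)‖ :=
    hν.norm.comp_smul (by positivity)
  calc ‖∫ x, g x ∂ν‖ = ‖∫ x, 𝓕⁻ (𝓕 (g : V → ℂ)) x ∂ν‖ := by
        rw [g.continuous.fourierInv_fourier_eq g.integrable hFg]
    _ = ‖∫ ξ, charFun ν ((2 * π) • ξ) * 𝓕 (g : V → ℂ) ξ‖ := by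
        rw [integral_fourierInv_eq_integral_charFun_mul ν hFg]
    _ ≤ ∫ ξ, ‖charFun ν ((2 * π) • ξ)‖ * ∫ x, ‖g x‖ := by
        refine norm_integral_le_of_norm_le (hscale.mul_const _) (.of_forall fun ξ => ?_)
        rw [norm_mul]
        gcongr
        exact hFg_le ξ
    _ = ((2 * π) ^ finrank ℝ V)⁻¹ * (∫ ξ, ‖charFun ν ξ‖) * ∫ x, ‖g x‖ := by
        rw [integral_mul_const, Measure.integral_comp_smul volume (fun ξ => ‖charFun ν ξ‖),
          smul_eq_mul, abs_of_pos (by positivity)]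

theorem MeasureTheory.Measure.le_smul_volume_of_integrable_charFun (ν : Measure V) [IsFiniteMeasure ν]
    (hν : Integrable (charFun ν)) :
    ν ≤ ENNReal.ofReal (((2 * π) ^ finrank ℝ V)⁻¹ * ∫ ξ, ‖charFun ν ξ‖) • volume := by
  set C := ((2 * π) ^ finrank ℝ V)⁻¹ * ∫ ξ, ‖charFun ν ξ‖
  refine Measure.le_smul_of_integral_le (c := C.toNNReal) fun f hf hfc hf0 => ?_
  let g : 𝓢(V, ℂ) := (hfc.comp_left Complex.ofReal_zero).toSchwartzMap
    (Complex.ofRealCLM.contDiff.comp hf)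
  have hg : ∀ x, g x = f x := fun _ => rfl
  calc ∫ x, f x ∂ν ≤ ‖∫ x, g x ∂ν‖ := by
        simp only [hg, integral_complex_ofReal, Complex.norm_real, Real.norm_eq_abs]
        exact le_abs_self _
    _ ≤ C * ∫ x, ‖g x‖ := norm_integral_le_of_integrable_charFun ν hν g
    _ = C.toNNReal * ∫ x, f x := by
        simp only [hg, Complex.norm_real, Real.norm_eq_abs, abs_of_nonneg (hf0 _)]
        rw [Real.coe_toNNReal _ (by positivity)]

end

theorem setOf_le_eq_smul_setOf_le_one {E : Type*} [AddCommGroup E] [Module ℝ E] {N : E → ℝ}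
    (hN : ∀ (c : ℝ) (x : E), N (c • x) = |c| * N x) {t : ℝ} (ht : 0 < t) :
    {x | N x ≤ t} = t • {x | N x ≤ 1} := by
  ext x
  rw [mem_smul_set_iff_inv_smul_mem₀ ht.ne', mem_ofPred_eq, mem_ofPred_eq, hN,
    abs_of_pos (inv_pos.2 ht), inv_mul_le_iff₀ ht, mul_one]

theorem small_ball_char_fun_general (n : ℕ) {Ω : Type*} [MeasureSpace Ω]
    (μ : Measure Ω) [IsProbabilityMeasure μ]
    (X : Ω → EuclideanSpace ℝ (Fin n)) (hX : Measurable X)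
    (N : EuclideanSpace ℝ (Fin n) → ℝ)
    (hhom : ∀ (c : ℝ) (x : EuclideanSpace ℝ (Fin n)), N (c • x) = |c| * N x)
    (hKbdd : Bornology.IsBounded {x : EuclideanSpace ℝ (Fin n) | N x ≤ 1})
    (φ : EuclideanSpace ℝ (Fin n) → ℂ)
    (hφ : ∀ ξ, φ ξ = ∫ ω, Complex.exp (Complex.I * ((inner ℝ ξ (X ω) : ℝ) : ℂ)) ∂μ)
    (hint : Integrable fun ξ : EuclideanSpace ℝ (Fin n) => ‖φ ξ‖)
    (t : ℝ) (ht : 0 < t) :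
    (μ {ω | N (X ω) ≤ t}).toReal ≤
      (volume {x : EuclideanSpace ℝ (Fin n) | N x ≤ 1}).toReal * (t / (2 * π)) ^ n *
        ∫ ξ : EuclideanSpace ℝ (Fin n), ‖φ ξ‖ := by
  set ν := μ.map X
  have hφν : φ = charFun ν := funext fun ξ => by
    rw [hφ, charFun_apply, integral_map hX.aemeasurable (by fun_prop)]
    simp only [real_inner_comm, mul_comm]
  rw [hφν] at hint ⊢
  have hν : Integrable (charFun ν) :=
    (integrable_norm_iff stronglyMeasurable_charFun.aestronglyMeasurable).1 hint
  set C := ((2 * π) ^ n)⁻¹ * ∫ ξ, ‖charFun ν ξ‖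
  have hν_le : ν ≤ ENNReal.ofReal C • volume := by
    simpa [C] using Measure.le_smul_volume_of_integrable_charFun ν hν
  have hvol : volume {x : EuclideanSpace ℝ (Fin n) | N x ≤ t} =
      ENNReal.ofReal (t ^ n) * volume {x : EuclideanSpace ℝ (Fin n) | N x ≤ 1} := by
    rw [setOf_le_eq_smul_setOf_le_one hhom ht, Measure.addHaar_smul, finrank_euclideanSpace_fin,
      abs_of_pos (pow_pos ht n)]
  have hK : volume {x : EuclideanSpace ℝ (Fin n) | N x ≤ 1} ≠ ∞ := hKbdd.measure_lt_top.ne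
  calc (μ {ω | N (X ω) ≤ t}).toReal ≤ (ν {x | N x ≤ t}).toReal :=
        ENNReal.toReal_mono (measure_ne_top _ _) (Measure.le_map_apply hX.aemeasurable _)
    _ ≤ (ENNReal.ofReal C * volume {x | N x ≤ t}).toReal :=
        ENNReal.toReal_mono (by rw [hvol]; finiteness) (hν_le _)
    _ = _ := by
        rw [hvol, ENNReal.toReal_mul, ENNReal.toReal_mul, ENNReal.toReal_ofReal (by positivity),
          ENNReal.toReal_ofReal (by positivity), div_pow]
        ring

/-- Small ball estimate via the characteristic function: if `N` is a quasi-norm on `ℝⁿ`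
(homogeneous) whose unit ball `K = {x | N x ≤ 1}` is bounded and measurable, then
`P(N(X) ≤ t) ≤ vol(K) (t/(2π))ⁿ ∫ |φ_X|`. -/
theorem small_ball_char_fun (n : ℕ) {Ω : Type*} [MeasureSpace Ω]
    (μ : Measure Ω) [IsProbabilityMeasure μ]
    (X : Ω → EuclideanSpace ℝ (Fin n)) (hX : Measurable X)
    (N : EuclideanSpace ℝ (Fin n) → ℝ)
    (hhom : ∀ (c : ℝ) (x : EuclideanSpace ℝ (Fin n)), N (c • x) = |c| * N x)
    (hpos : ∀ x, 0 ≤ N x)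
    (hKbdd : Bornology.IsBounded {x : EuclideanSpace ℝ (Fin n) | N x ≤ 1})
    (hKmeas : MeasurableSet {x : EuclideanSpace ℝ (Fin n) | N x ≤ 1})
    (φ : EuclideanSpace ℝ (Fin n) → ℂ)
    (hφ : ∀ ξ, φ ξ = ∫ ω, Complex.exp (Complex.I * ((inner ℝ ξ (X ω) : ℝ) : ℂ)) ∂μ)
    (hint : Integrable fun ξ : EuclideanSpace ℝ (Fin n) => ‖φ ξ‖)
    (t : ℝ) (ht : 0 < t) :
    (μ {ω | N (X ω) ≤ t}).toReal ≤
      (volume {x : EuclideanSpace ℝ (Fin n) | N x ≤ 1}).toReal * (t / (2 * π)) ^ n *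
        ∫ ξ : EuclideanSpace ℝ (Fin n), ‖φ ξ‖ :=
  small_ball_char_fun_general n μ X hX N hhom hKbdd φ hφ hint t ht
end

section
/- For real numbers β > 0, p ∈ [1,2], t > 0 with p t² ≤ 2, and a positive integer n with βp ≥ n: ∫_0^∞ r^{n-1} min(1, r^{-βp}) e^{-p t² r²/2} dr ≤ log(2e/(p t²)). -/
/-!
Since `βp ≥ n`, the factor `r^(n-1) min(1, r^(-βp))` is at most `min(1, r⁻¹)`, so with
`a = pt²/2 ≤ 1` it suffices to bound `∫₀^∞ min(1, r⁻¹) e^(-ar²) dr`. Split at `1` and at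
`R = a^(-1/2)`: on `(0, 1]` use `e^(-x) ≤ 1 - x + x²/2`, giving `1 - a/3 + a²/10`;
on `(1, R]` drop the Gaussian, giving `log R = -(log a)/2`; on `(R, ∞)` use `r⁻¹ ≤ a r`,
giving `e⁻¹/2`.
The sum is at most `1 - log a` because `log a ≤ a - 1` and `e⁻¹ < 0.368`.
-/

open Real MeasureTheory Set Filter Topology

lemma exp_neg_le_one_sub_add_sq_div_two {x : ℝ} (hx : 0 ≤ x) :
    exp (-x) ≤ 1 - x + x ^ 2 / 2 := by
  -- `(1 - x + x²/2)(1 + x + x²/2) = 1 + x⁴/4`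
  have hq : 1 ≤ (1 - x + x ^ 2 / 2) * (1 + x + x ^ 2 / 2) := by nlinarith [pow_nonneg hx 4]
  rw [exp_neg, inv_le_iff_one_le_mul₀ (exp_pos x)]
  exact hq.trans (mul_le_mul_of_nonneg_left (quadratic_le_exp_of_nonneg hx) (by nlinarith))

lemma pow_mul_min_one_rpow_neg_le {r s : ℝ} {n : ℕ} (hr : 0 < r) (hn : 0 < n)
    (hns : (n : ℝ) ≤ s) : r ^ (n - 1) * min 1 (r ^ (-s)) ≤ min 1 r⁻¹ := by
  rcases le_or_gt r 1 with hr1 | hr1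
  · rw [min_eq_left ((one_le_inv₀ hr).mpr hr1)]
    exact mul_le_one₀ (pow_le_one₀ hr.le hr1) (le_min zero_le_one (rpow_nonneg hr.le _))
      (min_le_left _ _)
  · rw [min_eq_right (inv_le_one_of_one_le₀ hr1.le), ← rpow_neg_one]
    calc r ^ (n - 1) * min 1 (r ^ (-s)) ≤ r ^ ((n : ℝ) - 1) * r ^ (-s) := by
          rw [← Nat.cast_pred hn, rpow_natCast]
          exact mul_le_mul_of_nonneg_left (min_le_right _ _) (by positivity)
      _ = r ^ ((n : ℝ) - 1 - s) := by rw [← rpow_add hr, ← sub_eq_add_neg]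
      _ ≤ r ^ (-1 : ℝ) := rpow_le_rpow_of_exponent_le hr1.le (by linarith)

lemma integral_Ioi_mul_exp_neg_mul_sq {a : ℝ} (ha : 0 < a) (R : ℝ) :
    ∫ r in Ioi R, r * exp (-a * r ^ 2) = exp (-a * R ^ 2) / (2 * a) := by
  have hderiv (x : ℝ) : HasDerivAt (fun r ↦ exp (-a * r ^ 2) / -(2 * a))
      (x * exp (-a * x ^ 2)) x := by
    refine (((hasDerivAt_pow 2 x).const_mul (-a)).exp.div_const (-(2 * a))).congr_deriv ?_
    field_simp
    ring
  have hlim : Tendsto (fun r ↦ exp (-a * r ^ 2) / -(2 * a)) atTop (𝓝 0) := by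
    have : Tendsto (fun r : ℝ ↦ -a * r ^ 2) atTop atBot :=
      (tendsto_pow_atTop two_ne_zero).const_mul_atTop_of_neg (neg_neg_of_pos ha)
    simpa using (tendsto_exp_atBot.comp this).div_const (-(2 * a))
  rw [integral_Ioi_of_hasDerivAt_of_tendsto' (fun x _ ↦ hderiv x)
    (integrable_mul_exp_neg_mul_sq ha).integrableOn hlim]
  field_simp
  ring

noncomputable def minInvGaussian (a r : ℝ) : ℝ := min 1 r⁻¹ * exp (-a * r ^ 2)

section minInvGaussian

variable {a : ℝ}

lemma minInvGaussian_nonneg {r : ℝ} (hr : 0 < r) : 0 ≤ minInvGaussian a r :=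
  mul_nonneg (le_min zero_le_one (inv_nonneg.mpr hr.le)) (exp_pos _).le

lemma minInvGaussian_le_exp (r : ℝ) : minInvGaussian a r ≤ exp (-a * r ^ 2) :=
  mul_le_of_le_one_left (exp_pos _).le (min_le_left _ _)

lemma minInvGaussian_le_inv_mul_exp (r : ℝ) : minInvGaussian a r ≤ r⁻¹ * exp (-a * r ^ 2) :=
  mul_le_mul_of_nonneg_right (min_le_right _ _) (exp_pos _).le

lemma integrableOn_minInvGaussian (ha : 0 < a) : IntegrableOn (minInvGaussian a) (Ioi 0) := by
  refine (integrable_exp_neg_mul_sq ha).integrableOn.mono' ?_ ?_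
  · exact ((measurable_const.min measurable_inv).mul (by fun_prop)).aestronglyMeasurable
  · filter_upwards [ae_restrict_mem measurableSet_Ioi] with r hr
    rw [norm_of_nonneg (minInvGaussian_nonneg hr)]
    exact minInvGaussian_le_exp r

lemma intervalIntegrable_minInvGaussian (ha : 0 < a) {b c : ℝ} (hb : 0 ≤ b) (hc : 0 ≤ c) :
    IntervalIntegrable (minInvGaussian a) volume b c :=
  intervalIntegrable_iff.mpr <| (integrableOn_minInvGaussian ha).mono_set
    fun _ hx ↦ (le_min hb hc).trans_lt hx.1

lemma integral_zero_one_minInvGaussian_le (ha : 0 < a) :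
    ∫ r in (0 : ℝ)..1, minInvGaussian a r ≤ 1 - a / 3 + a ^ 2 / 10 := by
  have hpoly :
      ∫ r in (0 : ℝ)..1, (1 - a * r ^ 2 + (a * r ^ 2) ^ 2 / 2) = 1 - a / 3 + a ^ 2 / 10 := by
    simp only [mul_pow, ← pow_mul]
    rw [intervalIntegral.integral_add ((by fun_prop : Continuous _).intervalIntegrable _ _)
      ((by fun_prop : Continuous _).intervalIntegrable _ _)]
    norm_num [integral_pow]
    ring
  rw [← hpoly]
  refine intervalIntegral.integral_mono_on zero_le_one
    (intervalIntegrable_minInvGaussian ha le_rfl zero_le_one)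
    ((by fun_prop : Continuous _).intervalIntegrable _ _) fun r _ ↦ ?_
  calc minInvGaussian a r ≤ exp (-(a * r ^ 2)) := by
        simpa only [neg_mul] using minInvGaussian_le_exp r
    _ ≤ _ := exp_neg_le_one_sub_add_sq_div_two (by positivity)

lemma integral_one_minInvGaussian_le_log (ha : 0 < a) {R : ℝ} (hR : 1 ≤ R) :
    ∫ r in (1 : ℝ)..R, minInvGaussian a r ≤ log R := by
  have hinv : IntervalIntegrable (fun r : ℝ ↦ r⁻¹) volume 1 R :=
    intervalIntegral.intervalIntegrable_inv
      (fun r hr ↦ by rw [uIcc_of_le hR] at hr; linarith [hr.1]) continuousOn_id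
  calc ∫ r in (1 : ℝ)..R, minInvGaussian a r ≤ ∫ r in (1 : ℝ)..R, r⁻¹ := by
        refine intervalIntegral.integral_mono_on hR
          (intervalIntegrable_minInvGaussian ha zero_le_one (by linarith)) hinv fun r hr ↦ ?_
        refine (minInvGaussian_le_inv_mul_exp r).trans (mul_le_of_le_one_right ?_ ?_)
        · exact inv_nonneg.mpr (by linarith [hr.1])
        · exact exp_le_one_iff.mpr (by nlinarith)
    _ = log R := by rw [integral_inv_of_pos one_pos (by linarith), div_one]

lemma setIntegral_Ioi_minInvGaussian_le (ha : 0 < a) {R : ℝ} (hR : 0 < R) :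
    ∫ r in Ioi R, minInvGaussian a r ≤ exp (-a * R ^ 2) / (2 * a * R ^ 2) := by
  calc ∫ r in Ioi R, minInvGaussian a r ≤ ∫ r in Ioi R, r * exp (-a * r ^ 2) / R ^ 2 := by
        refine setIntegral_mono_on
          ((integrableOn_minInvGaussian ha).mono_set (Ioi_subset_Ioi hR.le))
          ((integrable_mul_exp_neg_mul_sq ha).integrableOn.div_const _) measurableSet_Ioi
          fun r (hr : R < r) ↦ ?_
        have hinv : r⁻¹ ≤ r / R ^ 2 := by
          rw [inv_le_iff_one_le_mul₀ (hR.trans hr), div_mul_eq_mul_div,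
            le_div_iff₀ (by positivity)]
          nlinarith
        calc minInvGaussian a r ≤ r⁻¹ * exp (-a * r ^ 2) := minInvGaussian_le_inv_mul_exp r
          _ ≤ r / R ^ 2 * exp (-a * r ^ 2) := mul_le_mul_of_nonneg_right hinv (exp_pos _).le
          _ = r * exp (-a * r ^ 2) / R ^ 2 := by ring
    _ = exp (-a * R ^ 2) / (2 * a * R ^ 2) := by
        rw [integral_div, integral_Ioi_mul_exp_neg_mul_sq ha]
        field_simp

theorem setIntegral_Ioi_zero_minInvGaussian_le (ha : 0 < a) (ha1 : a ≤ 1) :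
    ∫ r in Ioi 0, minInvGaussian a r ≤ 1 - log a := by
  set R := (√a)⁻¹
  have hR1 : 1 ≤ R := (one_le_inv₀ (sqrt_pos.mpr ha)).mpr (sqrt_le_one.mpr ha1)
  have haR : a * R ^ 2 = 1 := by rw [inv_pow, sq_sqrt ha.le, mul_inv_cancel₀ ha.ne']
  have hlogR : log R = -(log a / 2) := by rw [log_inv, log_sqrt ha.le]
  have hint := integrableOn_minInvGaussian ha
  rw [← intervalIntegral.integral_interval_add_Ioi hint
      (hint.mono_set (Ioi_subset_Ioi zero_le_one)),
    ← intervalIntegral.integral_interval_add_Ioi (b := R)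
      (hint.mono_set (Ioi_subset_Ioi zero_le_one)) (hint.mono_set (Ioi_subset_Ioi (by linarith)))]
  have h₁ := integral_zero_one_minInvGaussian_le ha
  have h₂ := integral_one_minInvGaussian_le_log ha hR1
  have h₃ := setIntegral_Ioi_minInvGaussian_le ha (zero_lt_one.trans_le hR1)
  rw [neg_mul, mul_assoc, haR] at h₃
  nlinarith [log_le_sub_one_of_pos ha, exp_neg_one_lt_d9]

end minInvGaussian

theorem integral_bound_beta_p_large_general (β p t : ℝ) (n : ℕ) (hp : 1 ≤ p)
    (ht : 0 < t) (hpt : p * t ^ 2 ≤ 2) (hn : 0 < n)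
    (hβp : (n : ℝ) ≤ β * p) :
    ∫ r in Set.Ioi (0 : ℝ),
        r ^ (n - 1) * min 1 (r ^ (-(β * p))) * Real.exp (-p * t ^ 2 * r ^ 2 / 2) ≤
      Real.log (2 * Real.exp 1 / (p * t ^ 2)) := by
  have ha : 0 < p * t ^ 2 / 2 := by have := zero_lt_one.trans_le hp; positivity
  have hlog : log (2 * exp 1 / (p * t ^ 2)) = 1 - log (p * t ^ 2 / 2) := by
    rw [show 2 * exp 1 / (p * t ^ 2) = exp 1 / (p * t ^ 2 / 2) by field_simp,
      log_div (exp_ne_zero 1) ha.ne', log_exp]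
  rw [hlog]
  refine (integral_mono_of_nonneg ?_ (integrableOn_minInvGaussian ha) ?_).trans
    (setIntegral_Ioi_zero_minInvGaussian_le ha (by linarith))
  · filter_upwards [ae_restrict_mem measurableSet_Ioi] with r (hr : 0 < r)
    positivity
  · filter_upwards [ae_restrict_mem measurableSet_Ioi] with r (hr : 0 < r)
    rw [minInvGaussian, show -p * t ^ 2 * r ^ 2 / 2 = -(p * t ^ 2 / 2) * r ^ 2 by ring]
    exact mul_le_mul_of_nonneg_right (pow_mul_min_one_rpow_neg_le hr hn hβp) (exp_pos _).le

theorem integral_bound_beta_p_large (β p t : ℝ) (n : ℕ) (hβ : 0 < β) (hp : 1 ≤ p)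
    (hp2 : p ≤ 2) (ht : 0 < t) (hpt : p * t ^ 2 ≤ 2) (hn : 0 < n)
    (hβp : (n : ℝ) ≤ β * p) :
    ∫ r in Set.Ioi (0 : ℝ),
        r ^ (n - 1) * min 1 (r ^ (-(β * p))) * Real.exp (-p * t ^ 2 * r ^ 2 / 2) ≤
      Real.log (2 * Real.exp 1 / (p * t ^ 2)) :=
  integral_bound_beta_p_large_general β p t n hp ht hpt hn hβp
end

section
/- For p ≥ 1, t > 0 with p t² ≥ n and a positive integer n ≥ 2: ∫_0^1 r^{n-1} e^{-p t² r²/2} dr ≤ ((n/(p t²)) · log(e p t²/n))^{n/2}. -/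
open Real MeasureTheory

/-!
Write `p t² = n x` with `x ≥ 1` and put `s = log (e x) / x`, so that `0 < s ≤ 1` and the right-hand
side is `s ^ (n/2)`. Split the integral at `√s`: on `[0, √s]` drop the exponential, which gives at
most `s ^ (n/2) / n`; on `[√s, 1]` bound the exponential by its value at `√s`, which gives at most
`exp (-n x s / 2) / n = (e x) ^ (-n/2) / n ≤ s ^ (n/2) / n`, because `log (e x) ≥ 1 ≥ 1/e`.
For `n ≥ 2` the two halves add up to at most `s ^ (n/2)`.
-/

lemma integral_pow_mul_exp_neg_mul_sq_le {a c : ℝ} {n : ℕ} (hn : 0 < n) (ha : 0 ≤ a)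
    (hc0 : 0 ≤ c) (hc1 : c ≤ 1) :
    ∫ r in (0 : ℝ)..1, r ^ (n - 1) * exp (-a * r ^ 2 / 2) ≤ (c ^ n + exp (-a * c ^ 2 / 2)) / n := by
  set f : ℝ → ℝ := fun r ↦ r ^ (n - 1) * exp (-a * r ^ 2 / 2)
  have hf : Continuous f := by fun_prop
  have integral_pow_eq (u v : ℝ) : ∫ r in u..v, r ^ (n - 1) = (v ^ n - u ^ n) / n := by
    rw [integral_pow, Nat.sub_add_cancel hn, Nat.cast_pred hn, sub_add_cancel]
  have head : ∫ r in (0 : ℝ)..c, f r ≤ c ^ n / n := by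
    calc ∫ r in (0 : ℝ)..c, f r ≤ ∫ r in (0 : ℝ)..c, r ^ (n - 1) := by
          refine intervalIntegral.integral_mono_on hc0 (hf.intervalIntegrable _ _)
            (by apply Continuous.intervalIntegrable; fun_prop) fun r hr ↦ ?_
          refine mul_le_of_le_one_right (pow_nonneg hr.1 _) (exp_le_one_iff.mpr ?_)
          have := sq_nonneg r
          nlinarith
      _ = c ^ n / n := by rw [integral_pow_eq, zero_pow hn.ne', sub_zero]
  have tail : ∫ r in c..1, f r ≤ exp (-a * c ^ 2 / 2) / n := by
    calc ∫ r in c..1, f r ≤ ∫ r in c..1, r ^ (n - 1) * exp (-a * c ^ 2 / 2) := by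
          refine intervalIntegral.integral_mono_on hc1 (hf.intervalIntegrable _ _)
            (by apply Continuous.intervalIntegrable; fun_prop) fun r hr ↦ ?_
          refine mul_le_mul_of_nonneg_left (exp_le_exp.mpr ?_) (pow_nonneg (hc0.trans hr.1) _)
          have := pow_le_pow_left₀ hc0 hr.1 2
          nlinarith
      _ = (1 - c ^ n) / n * exp (-a * c ^ 2 / 2) := by
          rw [intervalIntegral.integral_mul_const, integral_pow_eq, one_pow]
      _ ≤ exp (-a * c ^ 2 / 2) / n := by
          rw [div_mul_eq_mul_div]
          gcongr
          exact mul_le_of_le_one_left (exp_pos _).le (sub_le_self _ (pow_nonneg hc0 _))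
  rw [← intervalIntegral.integral_add_adjacent_intervals (hf.intervalIntegrable 0 c)
    (hf.intervalIntegrable c 1), add_div]
  exact add_le_add head tail

lemma log_exp_one_mul {x : ℝ} (hx : 0 < x) : log (exp 1 * x) = 1 + log x := by
  rw [log_mul (exp_pos 1).ne' hx.ne', log_exp]

lemma inv_mul_log_exp_one_mul_mem_Ioc {x : ℝ} (hx : 1 ≤ x) :
    x⁻¹ * log (exp 1 * x) ∈ Set.Ioc 0 1 := by
  have hx0 : 0 < x := by linarith
  rw [log_exp_one_mul hx0]
  have hlog : 0 ≤ log x := log_nonneg hx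
  refine ⟨by positivity, ?_⟩
  rw [inv_mul_le_one₀ hx0]
  linarith [log_le_sub_one_of_pos hx0]

lemma exp_neg_mul_inv_mul_log_le {x m : ℝ} (hx : 1 ≤ x) (hm : 0 ≤ m) :
    exp (-(m * x) * (x⁻¹ * log (exp 1 * x)) / 2) ≤ (x⁻¹ * log (exp 1 * x)) ^ (m / 2) := by
  have hx0 : 0 < x := by linarith
  have hex : 0 < exp 1 * x := by positivity
  have key : (exp 1 * x)⁻¹ ≤ x⁻¹ * log (exp 1 * x) := by
    rw [mul_inv, mul_comm]
    gcongr
    rw [log_exp_one_mul hx0]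
    have := log_nonneg hx
    have := inv_le_one_of_one_le₀ (one_le_exp zero_le_one)
    linarith
  calc exp (-(m * x) * (x⁻¹ * log (exp 1 * x)) / 2)
      = (exp 1 * x)⁻¹ ^ (m / 2) := by
        rw [inv_rpow hex.le, ← rpow_neg hex.le, rpow_def_of_pos hex]
        field_simp
    _ ≤ (x⁻¹ * log (exp 1 * x)) ^ (m / 2) := by gcongr

theorem integral_bound_pt_large_general (p t : ℝ) (n : ℕ)
    (hn : 2 ≤ n) (hpt : (n : ℝ) ≤ p * t ^ 2) :
    ∫ r in Set.Icc (0 : ℝ) 1, r ^ (n - 1) * Real.exp (-p * t ^ 2 * r ^ 2 / 2) ≤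
      (((n : ℝ) / (p * t ^ 2)) * Real.log (Real.exp 1 * p * t ^ 2 / n)) ^ ((n : ℝ) / 2) := by
  have hn0 : (0 : ℝ) < n := by positivity
  have hn2 : (2 : ℝ) ≤ n := by exact_mod_cast hn
  obtain ⟨x, hx, ha⟩ : ∃ x, 1 ≤ x ∧ p * t ^ 2 = n * x :=
    ⟨p * t ^ 2 / n, (one_le_div hn0).mpr hpt, by field_simp⟩
  have hrhs : (n : ℝ) / (p * t ^ 2) * log (exp 1 * p * t ^ 2 / n) = x⁻¹ * log (exp 1 * x) := by
    rw [mul_assoc (exp 1), ha]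
    field_simp
  obtain ⟨hs0, hs1⟩ := inv_mul_log_exp_one_mul_mem_Ioc hx
  set s := x⁻¹ * log (exp 1 * x)
  have hbound := integral_pow_mul_exp_neg_mul_sq_le (a := n * x) (n := n) (by omega)
    (by positivity) (sqrt_nonneg s) (sqrt_le_one.mpr hs1)
  rw [sq_sqrt hs0.le] at hbound
  have hexp := exp_neg_mul_inv_mul_log_le hx hn0.le
  rw [hrhs, neg_mul p, ha, integral_Icc_eq_integral_Ioc,
    ← intervalIntegral.integral_of_le zero_le_one, rpow_div_two_eq_sqrt _ hs0.le, rpow_natCast]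
  rw [rpow_div_two_eq_sqrt _ hs0.le, rpow_natCast] at hexp
  calc _ ≤ (√s ^ n + exp (-(n * x) * s / 2)) / n := hbound
    _ ≤ 2 * √s ^ n / n := by gcongr; linarith
    _ ≤ √s ^ n := by
      rw [div_le_iff₀ hn0, mul_comm]
      gcongr

theorem integral_bound_pt_large (p t : ℝ) (n : ℕ) (hp : 1 ≤ p) (ht : 0 < t)
    (hn : 2 ≤ n) (hpt : (n : ℝ) ≤ p * t ^ 2) :
    ∫ r in Set.Icc (0 : ℝ) 1, r ^ (n - 1) * Real.exp (-p * t ^ 2 * r ^ 2 / 2) ≤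
      (((n : ℝ) / (p * t ^ 2)) * Real.log (Real.exp 1 * p * t ^ 2 / n)) ^ ((n : ℝ) / 2) :=
  integral_bound_pt_large_general p t n hn hpt
end

section
/- For p ≥ 1, t > 0 with 2 ≤ p t² ≤ n and a positive integer n: ∫_0^1 r^{n-1} e^{-p t² r²/2} dr ≤ 2 e^{-p t²/18}. -/
/-! On `[0, 2/3]` the factor `r ^ (n - 1)` is at most `(2/3) ^ (n - 1) ≤ (3/2) e ^ (-n/18)`,
and `n ≥ p t²`; on `[2/3, 1]` the Gaussian factor is at most `e ^ (-2 p t² / 9)`.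
So the integrand is bounded by `2 e ^ (-p t²/18)` on all of `[0, 1]`. -/

open Real MeasureTheory

lemma two_div_three_le_exp_neg : (2 / 3 : ℝ) ≤ exp (-(1 / 18)) := by
  linarith [add_one_le_exp (-(1 / 18) : ℝ)]

lemma two_div_three_pow_le_exp (n : ℕ) : (2 / 3 : ℝ) ^ n ≤ exp (-n / 18) :=
  calc (2 / 3 : ℝ) ^ n ≤ exp (-(1 / 18)) ^ n := by gcongr; exact two_div_three_le_exp_neg
    _ = exp (-n / 18) := by rw [← exp_nat_mul]; ring_nf

lemma pow_pred_mul_exp_le_of_le_two_div_three {a r : ℝ} {n : ℕ} (ha : 0 ≤ a)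
    (han : a ≤ n) (hr₀ : 0 ≤ r) (hr : r ≤ 2 / 3) :
    r ^ (n - 1) * exp (-a * r ^ 2 / 2) ≤ 2 * exp (-a / 18) := by
  have hgauss : exp (-a * r ^ 2 / 2) ≤ 1 := exp_le_one_iff.mpr (by nlinarith [sq_nonneg r])
  have hpred : (2 / 3 : ℝ) ^ (n - 1) ≤ 2 * (2 / 3) ^ n := by
    rcases n with _ | n
    · norm_num
    · rw [Nat.add_sub_cancel, pow_succ]
      nlinarith [pow_nonneg (by norm_num : (0 : ℝ) ≤ 2 / 3) n]
  calc r ^ (n - 1) * exp (-a * r ^ 2 / 2) ≤ (2 / 3) ^ (n - 1) * 1 := by gcongr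
    _ ≤ 2 * exp (-n / 18) := by linarith [two_div_three_pow_le_exp n]
    _ ≤ 2 * exp (-a / 18) := by gcongr

lemma pow_pred_mul_exp_le_of_two_div_three_le {a r : ℝ} {n : ℕ} (ha : 0 ≤ a)
    (hr : 2 / 3 ≤ r) (hr₁ : r ≤ 1) :
    r ^ (n - 1) * exp (-a * r ^ 2 / 2) ≤ 2 * exp (-a / 18) := by
  have hgauss : exp (-a * r ^ 2 / 2) ≤ exp (-a / 18) :=
    exp_le_exp.mpr (by nlinarith [mul_le_mul hr hr (by norm_num) (by linarith)])
  calc r ^ (n - 1) * exp (-a * r ^ 2 / 2) ≤ 1 * exp (-a / 18) := by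
        gcongr
        exact pow_le_one₀ (by linarith) hr₁
    _ ≤ 2 * exp (-a / 18) := by linarith [exp_pos (-a / 18)]

lemma pow_pred_mul_exp_le {a r : ℝ} {n : ℕ} (ha : 0 ≤ a) (han : a ≤ n)
    (hr : r ∈ Set.Icc (0 : ℝ) 1) :
    r ^ (n - 1) * exp (-a * r ^ 2 / 2) ≤ 2 * exp (-a / 18) := by
  rcases le_total r (2 / 3) with h | h
  · exact pow_pred_mul_exp_le_of_le_two_div_three ha han hr.1 h
  · exact pow_pred_mul_exp_le_of_two_div_three_le ha h hr.2

lemma setIntegral_Icc_zero_one_le {f : ℝ → ℝ} {C : ℝ} (hf : ∀ r ∈ Set.Icc (0 : ℝ) 1, f r ≤ C)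
    (hf₀ : ∀ r ∈ Set.Icc (0 : ℝ) 1, 0 ≤ f r) : ∫ r in Set.Icc (0 : ℝ) 1, f r ≤ C := by
  have := norm_setIntegral_le_of_norm_le_const (μ := volume) (by simp)
    fun r hr ↦ (Real.norm_of_nonneg (hf₀ r hr)).trans_le (hf r hr)
  simpa using (le_abs_self _).trans this

lemma integral_pow_pred_mul_exp_le {a : ℝ} {n : ℕ} (ha : 0 ≤ a) (han : a ≤ n) :
    ∫ r in Set.Icc (0 : ℝ) 1, r ^ (n - 1) * exp (-a * r ^ 2 / 2) ≤ 2 * exp (-a / 18) :=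
  setIntegral_Icc_zero_one_le (fun _ hr ↦ pow_pred_mul_exp_le ha han hr)
    fun _ hr ↦ mul_nonneg (pow_nonneg hr.1 _) (exp_pos _).le

theorem integral_bound_pt_medium_general (p t : ℝ) (n : ℕ)
    (hpt2 : 2 ≤ p * t ^ 2) (hptn : p * t ^ 2 ≤ (n : ℝ)) :
    ∫ r in Set.Icc (0 : ℝ) 1, r ^ (n - 1) * Real.exp (-p * t ^ 2 * r ^ 2 / 2) ≤
      2 * Real.exp (-p * t ^ 2 / 18) := by
  simpa only [neg_mul, neg_div] using
    integral_pow_pred_mul_exp_le (a := p * t ^ 2) (by linarith) hptn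

theorem integral_bound_pt_medium (p t : ℝ) (n : ℕ) (hp : 1 ≤ p) (ht : 0 < t)
    (hn : 0 < n) (hpt2 : 2 ≤ p * t ^ 2) (hptn : p * t ^ 2 ≤ (n : ℝ)) :
    ∫ r in Set.Icc (0 : ℝ) 1, r ^ (n - 1) * Real.exp (-p * t ^ 2 * r ^ 2 / 2) ≤
      2 * Real.exp (-p * t ^ 2 / 18) :=
  integral_bound_pt_medium_general p t n hpt2 hptn
end
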